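/- arXiv:nlin/0310028 — 10 statements merged into one kernel-verified Lean document; each statement's English description precedes it below -/
import Mathlib

section
/- Let V be a finite-dimensional real vector space and let P, P' : V* → V be skew-symmetric linear maps. Let (α_k)_{k ∈ ℤ} be a sequence of covectors in V* satisfying the Lenard–Magri recursion P α_i = P' α_{i+1} for all i ∈ ℤ. Then ⟨α_i, P α_k⟩ = 0 and ⟨α_i, P' α_k⟩ = 0 for all i, k ∈ ℤ. (This is the pointwise form of Corollary 1.1: a bi-infinite Lenard–Magri sequence of functions f_k with P df_i = P' df_{i+1} is in involution with respect to both Poisson brackets.) -/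
/-- pointwise Corollary 1.1: a bi-infinite Lenard–Magri sequence of
covectors `α : ℤ → V*` with `P α_i = P' α_{i+1}` is in involution with respect to
both skew-symmetric structures. -/
theorem stmt_1 (V : Type*) [AddCommGroup V] [Module ℝ V] [FiniteDimensional ℝ V]
    (P P' : Module.Dual ℝ V →ₗ[ℝ] V)
    (hP : ∀ α β : Module.Dual ℝ V, α (P β) = -(β (P α)))
    (hP' : ∀ α β : Module.Dual ℝ V, α (P' β) = -(β (P' α)))
    (α : ℤ → Module.Dual ℝ V)
    (hrec : ∀ i : ℤ, P (α i) = P' (α (i + 1))) :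
    ∀ i k : ℤ, (α i) (P (α k)) = 0 ∧ (α i) (P' (α k)) = 0 := by
  set A : ℤ → ℤ → ℝ := fun i k => (α i) (P (α k)) with hA
  -- shift identity: A i k = A (i+1) (k-1)
  have hshift : ∀ i k : ℤ, A i k = A (i + 1) (k - 1) := by
    intro i k
    have h1 : A i k = -(A (k + 1) (i - 1)) := by
      have : (α i) (P (α k)) = (α i) (P' (α (k + 1))) := by rw [hrec k]
      rw [hA]
      simp only []
      rw [this, hP' (α i) (α (k + 1))]
      congr 1
      have : P (α (i - 1)) = P' (α (i - 1 + 1)) := hrec (i - 1)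
      simp only [sub_add_cancel] at this
      rw [← this]
    have h2 : A (k + 1) (i - 1) = -(A (i - 1) (k + 1)) := hP _ _
    have h3 : A i k = A (i - 1) (k + 1) := by rw [h1, h2, neg_neg]
    have := h3.symm
    have h4 : A (i + 1) (k - 1) = A (i + 1 - 1) (k - 1 + 1) := by
      rw [← h3] at *
      exact (by
        have := (by
          have h1' : A (i + 1) (k - 1) = -(A (k - 1 + 1) (i + 1 - 1)) := by
            have : (α (i+1)) (P (α (k-1))) = (α (i+1)) (P' (α (k-1+1))) := by rw [hrec (k-1)]
            rw [hA]; simp only []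
            rw [this, hP' (α (i+1)) (α (k-1+1))]
            congr 1
            have hr : P (α (i + 1 - 1)) = P' (α (i + 1 - 1 + 1)) := hrec (i + 1 - 1)
            simp only [add_sub_cancel_right, sub_add_cancel] at hr
            rw [← hr]
            norm_num
          have h2' : A (k - 1 + 1) (i + 1 - 1) = -(A (i + 1 - 1) (k - 1 + 1)) := hP _ _
          rw [h1', h2', neg_neg] : A (i + 1) (k - 1) = A (i + 1 - 1) (k - 1 + 1))
        exact this)
    simp only [add_sub_cancel_right, sub_add_cancel] at h4
    exact h4.symm
  -- iterate: A i k = A (i+n) (k-n)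
  have hiter : ∀ n : ℤ, ∀ i k : ℤ, A i k = A (i + n) (k - n) := by
    intro n
    induction n using Int.induction_on with
    | zero => intro i k; simp
    | succ m ih =>
        intro i k
        rw [ih i k, hshift (i + m) (k - m)]
        ring_nf
    | pred m ih =>
        intro i k
        have := hshift (i + (-(m:ℤ) - 1)) (k - (-(m:ℤ) - 1))
        have h' := ih i k
        rw [show i + (-(m:ℤ) - 1) + 1 = i + -(m:ℤ) by ring,
            show k - (-(m:ℤ) - 1) - 1 = k - -(m:ℤ) by ring] at this
        rw [← this] at h'
        convert h' using 3 <;> ring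
  have hAzero : ∀ i k : ℤ, A i k = 0 := by
    intro i k
    have h1 : A i k = A k i := by
      have := hiter (k - i) i k
      simpa [show i + (k - i) = k by ring, show k - (k - i) = i by ring] using this
    have h2 : A i k = -(A k i) := hP _ _
    linarith [h1, h2]
  intro i k
  refine ⟨hAzero i k, ?_⟩
  have : P' (α k) = P (α (k - 1)) := by
    have := hrec (k - 1); simp only [sub_add_cancel] at this; rw [this]
  rw [this]
  exact hAzero i (k - 1)
end

section
/- Let V be a finite-dimensional real vector space and let P, P' : V* → V be skew-symmetric linear maps. Suppose α, β ∈ V* and λ, μ ∈ ℝ satisfy P'α = λ Pα, P'β = μ Pβ, and λ ≠ μ. Then ⟨α, Pβ⟩ = 0 and ⟨α, P'β⟩ = 0. (This is the key step in the proof of Theorem 2.6: functions whose differentials are eigencovectors of N* = P^{-1}P' relative to different eigenvalues are in involution with respect to both Poisson brackets.) -/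
/-!
By skew-symmetry of `P` and `P'`, the number `⟨α, P'β⟩` equals both `λ⟨α, Pβ⟩` and
`μ⟨α, Pβ⟩`, so `λ ≠ μ` forces `⟨α, Pβ⟩ = 0`, and then `⟨α, P'β⟩ = 0` as well.
-/

section SkewEigencovectors

variable {K V : Type*} [Field K] [AddCommGroup V] [Module K V]
  {P P' : Module.Dual K V →ₗ[K] V} {α β : Module.Dual K V} {lam mu : K}

lemma apply_apply_eq_mul_of_eigen_left (hP : ∀ α β : Module.Dual K V, α (P β) = -(β (P α)))
    (hP' : ∀ α β : Module.Dual K V, α (P' β) = -(β (P' α))) (hα : P' α = lam • P α) :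
    α (P' β) = lam * α (P β) := by
  rw [hP' α β, hα, map_smul, smul_eq_mul, hP α β]
  ring

lemma apply_apply_eq_mul_of_eigen_right (hβ : P' β = mu • P β) :
    α (P' β) = mu * α (P β) := by
  rw [hβ, map_smul, smul_eq_mul]

lemma apply_apply_eq_zero_of_eigen_ne (hP : ∀ α β : Module.Dual K V, α (P β) = -(β (P α)))
    (hP' : ∀ α β : Module.Dual K V, α (P' β) = -(β (P' α)))
    (hα : P' α = lam • P α) (hβ : P' β = mu • P β) (hne : lam ≠ mu) :
    α (P β) = 0 := by
  have hmul : lam * α (P β) = mu * α (P β) :=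
    (apply_apply_eq_mul_of_eigen_left hP hP' hα).symm.trans
      (apply_apply_eq_mul_of_eigen_right hβ)
  exact (mul_eq_mul_right_iff.mp hmul).resolve_left hne

end SkewEigencovectors

theorem stmt_3_general (V : Type*) [AddCommGroup V] [Module ℝ V]
    (P P' : Module.Dual ℝ V →ₗ[ℝ] V)
    (hP : ∀ α β : Module.Dual ℝ V, α (P β) = -(β (P α)))
    (hP' : ∀ α β : Module.Dual ℝ V, α (P' β) = -(β (P' α)))
    (α β : Module.Dual ℝ V) (lam mu : ℝ)
    (hα : P' α = lam • (P α)) (hβ : P' β = mu • (P β)) (hne : lam ≠ mu) :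
    α (P β) = 0 ∧ α (P' β) = 0 := by
  have hPβ : α (P β) = 0 := apply_apply_eq_zero_of_eigen_ne hP hP' hα hβ hne
  refine ⟨hPβ, ?_⟩
  rw [apply_apply_eq_mul_of_eigen_right hβ, hPβ, mul_zero]

/-- eigencovectors of `N* = P⁻¹P'` relative to different eigenvalues are in
involution with respect to both skew-symmetric structures: if `P'α = λ Pα`, `P'β = μ Pβ`
and `λ ≠ μ`, then `⟨α, Pβ⟩ = 0` and `⟨α, P'β⟩ = 0`. -/
theorem stmt_3 (V : Type*) [AddCommGroup V] [Module ℝ V] [FiniteDimensional ℝ V]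
    (P P' : Module.Dual ℝ V →ₗ[ℝ] V)
    (hP : ∀ α β : Module.Dual ℝ V, α (P β) = -(β (P α)))
    (hP' : ∀ α β : Module.Dual ℝ V, α (P' β) = -(β (P' α)))
    (α β : Module.Dual ℝ V) (lam mu : ℝ)
    (hα : P' α = lam • (P α)) (hβ : P' β = mu • (P β)) (hne : lam ≠ mu) :
    α (P β) = 0 ∧ α (P' β) = 0 :=
  stmt_3_general V P P' hP hP' α β lam mu hα hβ hne
end

section
/- Let V be a finite-dimensional real vector space, let P : V* → V be a skew-symmetric bijective linear map, and let P' : V* → V be skew-symmetric. Set N = P' ∘ P^{-1} : V → V (the pointwise value of the Nijenhuis/recursion operator). Then for every scalar λ ∈ ℝ, the eigenspace ker(N − λ·id_V) has even dimension. (This is the claim that, owing to the antisymmetry of the two Poisson tensors defining N, the eigenspaces of the Nijenhuis tensor are even dimensional at each point.) -/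
open Module LinearMap

/-- A finite-dimensional real vector space carrying a nondegenerate alternating
bilinear form has even dimension. -/
lemma even_finrank_of_alt_nondeg (n : ℕ) :
    ∀ (W : Type*) [AddCommGroup W] [Module ℝ W] [FiniteDimensional ℝ W]
      (B : LinearMap.BilinForm ℝ W), B.IsAlt → B.Nondegenerate →
      finrank ℝ W = n → Even n := by
  induction n using Nat.strong_induction_on with
  | _ n ih =>
    intro W _ _ _ B halt hnd hdim
    rcases Nat.eq_zero_or_pos n with h0 | hpos
    · simp [h0]
    · have hW : 0 < finrank ℝ W := hdim ▸ hpos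
      have : Nontrivial W := Module.nontrivial_of_finrank_pos hW
      obtain ⟨x, hx⟩ := exists_ne (0 : W)
      have hy : ∃ y, B x y ≠ 0 := by
        by_contra h
        push_neg at h
        exact hx (hnd.1 x h)
      obtain ⟨y, hxy⟩ := hy
      set U : Submodule ℝ W := Submodule.span ℝ {x, y} with hU
      have hBxx : B x x = 0 := halt x
      have hByy : B y y = 0 := halt y
      have hByx : B y x = -(B x y) := by
        exact (LinearMap.IsAlt.neg halt x y).symm
      -- restriction of B to U is nondegenerate
      have hrestr : (B.restrict U).Nondegenerate := by
        refine LinearMap.BilinForm.Nondegenerate.ofSeparatingLeft ?_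
        rintro ⟨u, hu⟩ h
        obtain ⟨a, b, rfl⟩ := Submodule.mem_span_pair.mp hu
        have hx' : (x : W) ∈ U := Submodule.subset_span (by simp)
        have hy' : (y : W) ∈ U := Submodule.subset_span (by simp)
        have h1 := h ⟨x, hx'⟩
        have h2 := h ⟨y, hy'⟩
        simp only [LinearMap.BilinForm.restrict_apply, LinearMap.domRestrict_apply,
          map_add, map_smul, LinearMap.add_apply, LinearMap.smul_apply,
          smul_eq_mul, hBxx, hByy, hByx] at h1 h2
        have hb : b = 0 := by
          rcases mul_eq_zero.mp (by linarith : b * -(B x y) = 0) with h | h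
          · exact h
          · exact absurd (neg_eq_zero.mp h) hxy
        have ha : a = 0 := by
          rcases mul_eq_zero.mp (by linarith : a * B x y = 0) with h | h
          · exact h
          · exact absurd h hxy
        ext
        simp [ha, hb]
      have hrefl : B.IsRefl := halt.isRefl
      have hcompl : IsCompl U (B.orthogonal U) :=
        LinearMap.BilinForm.isCompl_orthogonal_of_restrict_nondegenerate hrefl hrestr
      have hOO : B.orthogonal (B.orthogonal U) = U :=
        LinearMap.BilinForm.orthogonal_orthogonal hnd hrefl U
      have hOnd : (B.restrict (B.orthogonal U)).Nondegenerate := by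
        apply B.nondegenerate_restrict_of_disjoint_orthogonal hrefl
        rw [hOO]
        exact hcompl.disjoint.symm
      have hOalt : (B.restrict (B.orthogonal U)).IsAlt := fun u => halt u
      -- finrank U = 2
      have hli : LinearIndependent ℝ ![x, y] := by
        rw [LinearIndependent.pair_iff]
        intro s t hst
        have h1 : B (s • x + t • y) y = 0 := by rw [hst]; simp
        simp only [map_add, map_smul, LinearMap.add_apply, LinearMap.smul_apply,
          smul_eq_mul, hByy] at h1
        have hs : s = 0 := by
          rcases mul_eq_zero.mp (by linarith : s * B x y = 0) with h | h
          · exact h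
          · exact absurd h hxy
        have h2 : B x (s • x + t • y) = 0 := by rw [hst]; simp
        simp only [map_add, map_smul, smul_eq_mul, hBxx] at h2
        have ht : t = 0 := by
          rcases mul_eq_zero.mp (by simpa [hs] using h2 : t * B x y = 0) with h | h
          · exact h
          · exact absurd h hxy
        exact ⟨hs, ht⟩
      have hU2 : finrank ℝ U = 2 := by
        have hrange : Set.range ![x, y] = {x, y} := by
          simp [Matrix.range_cons, Matrix.range_empty, Set.pair_comm]
        rw [hU, ← hrange, finrank_span_eq_card hli]
        simp
      have h2n : 2 ≤ n := by
        have := Submodule.finrank_le U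
        omega
      have hOdim : finrank ℝ (B.orthogonal U) = n - 2 := by
        rw [LinearMap.BilinForm.finrank_orthogonal hnd U, hU2, hdim]
      have heven : Even (n - 2) :=
        ih (n - 2) (by omega) (B.orthogonal U) (B.restrict (B.orthogonal U)) hOalt hOnd hOdim
      obtain ⟨k, hk⟩ := heven
      exact ⟨k + 1, by omega⟩

/-- if `P : V* → V` is skew-symmetric and bijective, `P'` is skew-symmetric,
and `N = P' ∘ P⁻¹ : V → V` (characterized by `N (P α) = P' α`), then every eigenspace
`ker (N - λ·id)` of the Nijenhuis operator has even dimension. -/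
theorem stmt_4 (V : Type*) [AddCommGroup V] [Module ℝ V] [FiniteDimensional ℝ V]
    (P P' : Module.Dual ℝ V →ₗ[ℝ] V)
    (hP : ∀ α β : Module.Dual ℝ V, α (P β) = -(β (P α)))
    (hP' : ∀ α β : Module.Dual ℝ V, α (P' β) = -(β (P' α)))
    (hPbij : Function.Bijective P)
    (N : V →ₗ[ℝ] V) (hN : ∀ α : Module.Dual ℝ V, N (P α) = P' α)
    (lam : ℝ) :
    Even (Module.finrank ℝ (LinearMap.ker (N - lam • LinearMap.id))) := by
  classical
  set D := Module.Dual ℝ V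
  set Q : D →ₗ[ℝ] V := P' - lam • P with hQdef
  have hQ : ∀ α β : D, α (Q β) = -(β (Q α)) := by
    intro α β
    simp only [hQdef, LinearMap.sub_apply, LinearMap.smul_apply, map_sub, map_smul,
      smul_eq_mul, hP' α β, hP α β]
    ring
  -- ker (N - lam • id) = map P (ker Q)
  have hker : LinearMap.ker (N - lam • LinearMap.id) = (LinearMap.ker Q).map P := by
    ext v
    constructor
    · intro hv
      obtain ⟨α, rfl⟩ := hPbij.surjective v
      have h0 : N (P α) - lam • (P α) = 0 := by simpa using hv
      have hQα : Q α = 0 := by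
        simp only [hQdef, LinearMap.sub_apply, LinearMap.smul_apply]
        rw [← hN α]; exact h0
      exact ⟨α, LinearMap.mem_ker.mpr hQα, rfl⟩
    · rintro ⟨α, hα, rfl⟩
      simp only [LinearMap.mem_ker, hQdef, LinearMap.sub_apply, LinearMap.smul_apply] at hα ⊢
      rw [LinearMap.id_apply, hN α]
      exact hα
  have hkerdim : finrank ℝ (LinearMap.ker (N - lam • LinearMap.id))
      = finrank ℝ (LinearMap.ker Q) := by
    rw [hker]
    exact (Submodule.equivMapOfInjective P hPbij.injective _).symm.finrank_eq
  rw [hkerdim]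
  set K := LinearMap.ker Q with hK
  -- the dual has even dimension, via the form from P
  have hnD : Even (finrank ℝ D) := by
    refine even_finrank_of_alt_nondeg (finrank ℝ D) D (LinearMap.lcomp ℝ ℝ P) ?_ ?_ rfl
    · intro α
      have h := hP α α
      have h2 : ((LinearMap.lcomp ℝ ℝ P) α) α = α (P α) := rfl
      rw [h2]; linarith
    · refine LinearMap.BilinForm.Nondegenerate.ofSeparatingLeft ?_
      intro α hα
      have hsurj := hPbij.surjective
      ext v
      obtain ⟨β, rfl⟩ := hsurj v
      rw [LinearMap.zero_apply]; exact hα β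
  -- quotient form
  have hQker : ∀ α ∈ K, ∀ β : D, α (Q β) = 0 := by
    intro α hα β
    rw [hQ α β]
    simp only [hK, LinearMap.mem_ker] at hα
    rw [hα]
    simp
  have h1 : K ≤ LinearMap.ker (LinearMap.lcomp ℝ ℝ Q) := by
    intro α hα
    simp only [LinearMap.mem_ker]
    ext β
    exact hQker α hα β
  set B1 : (D ⧸ K) →ₗ[ℝ] D →ₗ[ℝ] ℝ := K.liftQ (LinearMap.lcomp ℝ ℝ Q) h1 with hB1
  have h2 : K ≤ LinearMap.ker B1.flip := by
    intro β hβ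
    simp only [LinearMap.mem_ker]
    ext u
    simp only [hK, LinearMap.mem_ker] at hβ
    simp only [LinearMap.comp_apply, LinearMap.zero_apply, Submodule.mkQ_apply]
    have h3 : (B1.flip β) (Submodule.Quotient.mk u) = u (Q β) := rfl
    rw [h3, hβ, map_zero]
  set B2 : (D ⧸ K) →ₗ[ℝ] (D ⧸ K) →ₗ[ℝ] ℝ := (K.liftQ B1.flip h2).flip with hB2
  have hB2apply : ∀ α β : D, B2 (K.mkQ α) (K.mkQ β) = α (Q β) := by
    intro α β
    simp only [hB2, hB1, LinearMap.flip_apply, Submodule.mkQ_apply, Submodule.liftQ_apply,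
      LinearMap.lcomp_apply]
    rfl
  have hquot : Even (finrank ℝ (D ⧸ K)) := by
    refine even_finrank_of_alt_nondeg _ (D ⧸ K) B2 ?_ ?_ rfl
    · intro u
      obtain ⟨α, rfl⟩ := K.mkQ_surjective u
      rw [hB2apply]
      have := hQ α α
      linarith
    · refine LinearMap.BilinForm.Nondegenerate.ofSeparatingLeft ?_
      intro u hu
      obtain ⟨α, rfl⟩ := K.mkQ_surjective u
      have hQα : Q α = 0 := by
        rw [← Module.forall_dual_apply_eq_zero_iff ℝ (Q α)]
        intro φ
        have := hu (K.mkQ φ)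
        rw [hB2apply] at this
        have h2 := hQ α φ
        linarith
      simp only [Submodule.mkQ_apply, Submodule.Quotient.mk_eq_zero]
      exact hQα
  have hsum := Submodule.finrank_quotient_add_finrank K
  rcases hnD with ⟨m, hm⟩
  rcases hquot with ⟨k, hk⟩
  exact ⟨m - k, by omega⟩
end

section
/- Let U ⊆ ℝ^m be open, let N : U → M_m(ℝ) be a matrix-valued map, and let λ_1, …, λ_n : U → ℝ be differentiable functions such that at every point x ∈ U one has N(x)ᵀ dλ_i(x) = λ_i(x) dλ_i(x) for each i. Define the functions p_1, …, p_n : U → ℝ by the identity of polynomials in λ: Π_{i=1}^n (λ − λ_i(x)) = λ^n − Σ_{k=1}^n p_k(x) λ^{n−k}, and set p_{n+1} ≡ 0. Then the 'Frobenius' recursion relations hold at every point: N(x)ᵀ dp_k(x) = dp_{k+1}(x) + p_k(x) dp_1(x) for k = 1, …, n. (These are the recursion relations satisfied by the coefficients of the minimal polynomial Δ_N(λ) = λ^n − p_1 λ^{n−1} − ⋯ − p_n of the Nijenhuis tensor.) -/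
open Finset

noncomputable section

def esymF {m n : ℕ} (lam : Fin n → (Fin m → ℝ) → ℝ) (j : ℕ) (x : Fin m → ℝ) : ℝ :=
  ∑ s ∈ Finset.powersetCard j Finset.univ, ∏ i ∈ s, lam i x

lemma hasFDerivAt_esymF {m n : ℕ} {lam : Fin n → (Fin m → ℝ) → ℝ} {x : Fin m → ℝ}
    (hd : ∀ i, DifferentiableAt ℝ (lam i) x) (j : ℕ) :
    HasFDerivAt (esymF lam j)
      (∑ s ∈ Finset.powersetCard j Finset.univ, ∑ i ∈ s,
        (∏ i' ∈ s.erase i, lam i' x) • fderiv ℝ (lam i) x) x := by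
  apply HasFDerivAt.fun_sum
  intro s hs
  exact HasFDerivAt.finset_prod (fun i _ => (hd i).hasFDerivAt)

lemma fderiv_esymF_apply {m n : ℕ} {lam : Fin n → (Fin m → ℝ) → ℝ} {x : Fin m → ℝ}
    (hd : ∀ i, DifferentiableAt ℝ (lam i) x) (j : ℕ) (w : Fin m → ℝ) :
    fderiv ℝ (esymF lam j) x w
      = ∑ i : Fin n, (∑ s ∈ (Finset.powersetCard j Finset.univ).filter (i ∈ ·),
          ∏ i' ∈ s.erase i, lam i' x) * fderiv ℝ (lam i) x w := by
  rw [(hasFDerivAt_esymF hd j).fderiv]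
  simp only [ContinuousLinearMap.coe_sum', Finset.sum_apply, ContinuousLinearMap.coe_smul',
    Pi.smul_apply, smul_eq_mul, Finset.sum_mul]
  calc ∑ s ∈ Finset.powersetCard j Finset.univ, ∑ i ∈ s,
        (∏ i' ∈ s.erase i, lam i' x) * fderiv ℝ (lam i) x w
      = ∑ s ∈ Finset.powersetCard j Finset.univ, ∑ i : Fin n,
          if i ∈ s then (∏ i' ∈ s.erase i, lam i' x) * fderiv ℝ (lam i) x w else 0 := by
        refine Finset.sum_congr rfl fun s _ => ?_
        rw [Finset.sum_ite_mem, Finset.univ_inter]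
    _ = ∑ i : Fin n, ∑ s ∈ Finset.powersetCard j Finset.univ,
          if i ∈ s then (∏ i' ∈ s.erase i, lam i' x) * fderiv ℝ (lam i) x w else 0 :=
        Finset.sum_comm
    _ = _ := by
        refine Finset.sum_congr rfl fun i _ => (Finset.sum_filter _ _).symm

lemma A_one {m n : ℕ} (lam : Fin n → (Fin m → ℝ) → ℝ) (x : Fin m → ℝ) (i : Fin n) :
    (∑ s ∈ (Finset.powersetCard 1 (Finset.univ : Finset (Fin n))).filter (i ∈ ·),
      ∏ i' ∈ s.erase i, lam i' x) = 1 := by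
  have : (Finset.powersetCard 1 (Finset.univ : Finset (Fin n))).filter (i ∈ ·) = {{i}} := by
    ext s
    simp only [Finset.mem_filter, Finset.mem_powersetCard, Finset.mem_singleton]
    constructor
    · rintro ⟨⟨-, hc⟩, hi⟩
      exact (Finset.card_eq_one.mp hc).elim fun a ha => by
        subst ha; simpa using (Finset.mem_singleton.mp hi) ▸ rfl
    · rintro rfl; simp
  rw [this]
  simp

lemma A_ident {m n : ℕ} (lam : Fin n → (Fin m → ℝ) → ℝ) (x : Fin m → ℝ) (i : Fin n) (j : ℕ) :
    lam i x * (∑ s ∈ (Finset.powersetCard j (Finset.univ : Finset (Fin n))).filter (i ∈ ·),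
        ∏ i' ∈ s.erase i, lam i' x)
      + (∑ s ∈ (Finset.powersetCard (j+1) (Finset.univ : Finset (Fin n))).filter (i ∈ ·),
        ∏ i' ∈ s.erase i, lam i' x)
      = esymF lam j x := by
  have h1 : lam i x * (∑ s ∈ (Finset.powersetCard j (Finset.univ : Finset (Fin n))).filter (i ∈ ·),
        ∏ i' ∈ s.erase i, lam i' x)
      = ∑ s ∈ (Finset.powersetCard j (Finset.univ : Finset (Fin n))).filter (i ∈ ·),
        ∏ i' ∈ s, lam i' x := by
    rw [Finset.mul_sum]
    refine Finset.sum_congr rfl fun s hs => ?_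
    exact Finset.mul_prod_erase s (fun i' => lam i' x) (Finset.mem_filter.mp hs).2
  have h2 : (∑ s ∈ (Finset.powersetCard (j+1) (Finset.univ : Finset (Fin n))).filter (i ∈ ·),
        ∏ i' ∈ s.erase i, lam i' x)
      = ∑ s ∈ (Finset.powersetCard j (Finset.univ : Finset (Fin n))).filter (fun s => ¬ i ∈ s),
        ∏ i' ∈ s, lam i' x := by
    refine Finset.sum_bij' (fun s _ => s.erase i) (fun s _ => insert i s) ?_ ?_ ?_ ?_ ?_
    · intro s hs
      obtain ⟨hmem, hi⟩ := Finset.mem_filter.mp hs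
      obtain ⟨-, hc⟩ := Finset.mem_powersetCard.mp hmem
      refine Finset.mem_filter.mpr ⟨Finset.mem_powersetCard.mpr ⟨Finset.subset_univ _, ?_⟩, ?_⟩
      · rw [Finset.card_erase_of_mem hi, hc]; omega
      · simp
    · intro s hs
      obtain ⟨hmem, hi⟩ := Finset.mem_filter.mp hs
      obtain ⟨-, hc⟩ := Finset.mem_powersetCard.mp hmem
      refine Finset.mem_filter.mpr ⟨Finset.mem_powersetCard.mpr ⟨Finset.subset_univ _, ?_⟩, ?_⟩
      · rw [Finset.card_insert_of_notMem hi, hc]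
      · simp
    · intro s hs
      exact Finset.insert_erase (Finset.mem_filter.mp hs).2
    · intro s hs
      exact Finset.erase_insert (Finset.mem_filter.mp hs).2
    · intro s hs; rfl
  rw [h1, h2, esymF, Finset.sum_filter_add_sum_filter_not]

lemma key {m n : ℕ} {lam : Fin n → (Fin m → ℝ) → ℝ} {x : Fin m → ℝ}
    {Nx : Matrix (Fin m) (Fin m) ℝ}
    (hd : ∀ i, DifferentiableAt ℝ (lam i) x)
    (he : ∀ i (v : Fin m → ℝ), fderiv ℝ (lam i) x (Nx.mulVec v) = lam i x * fderiv ℝ (lam i) x v)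
    (j : ℕ) (v : Fin m → ℝ) :
    fderiv ℝ (esymF lam j) x (Nx.mulVec v)
      = esymF lam j x * fderiv ℝ (esymF lam 1) x v - fderiv ℝ (esymF lam (j+1)) x v := by
  rw [fderiv_esymF_apply hd j, fderiv_esymF_apply hd (j+1), fderiv_esymF_apply hd 1]
  simp only [he, A_one, one_mul, Finset.mul_sum, ← Finset.sum_sub_distrib]
  refine Finset.sum_congr rfl fun i _ => ?_
  have := A_ident lam x i j
  linear_combination this * (fderiv ℝ (lam i) x v)

open Polynomial in
lemma p_eq {m n : ℕ} {lam : Fin n → (Fin m → ℝ) → ℝ} {p : Fin n → (Fin m → ℝ) → ℝ}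
    {y : Fin m → ℝ}
    (hpy : ∀ t : ℝ, ∏ i : Fin n, (t - lam i y)
      = t ^ n - ∑ k : Fin n, p k y * t ^ (n - 1 - (k : ℕ))) (k : Fin n) :
    p k y = (-1 : ℝ) ^ (k : ℕ) * esymF lam ((k : ℕ) + 1) y := by
  have hk := k.isLt
  set P : ℝ[X] := ∏ i : Fin n, (X - C (lam i y)) with hP
  set Q : ℝ[X] := X ^ n - ∑ k : Fin n, C (p k y) * X ^ (n - 1 - (k : ℕ)) with hQ
  have hPQ : P = Q := by
    apply Polynomial.funext
    intro t
    simp only [hP, hQ, eval_prod, eval_sub, eval_X, eval_C, eval_pow, eval_finset_sum, eval_mul]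
    exact hpy t
  have hQc : Q.coeff (n - 1 - (k : ℕ)) = -(p k y) := by
    rw [hQ, Polynomial.coeff_sub, Polynomial.coeff_X_pow, Polynomial.finset_sum_coeff]
    rw [if_neg (by omega)]
    rw [Finset.sum_eq_single k]
    · simp [Polynomial.coeff_C_mul, Polynomial.coeff_X_pow]
    · intro k' _ hne
      have : n - 1 - (k' : ℕ) ≠ n - 1 - (k : ℕ) := by
        have := k'.isLt
        intro h
        exact hne (Fin.ext (by omega))
      simp [Polynomial.coeff_C_mul, Polynomial.coeff_X_pow, this, Ne.symm this]
    · simp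
  have hPc : P.coeff (n - 1 - (k : ℕ)) = (-1 : ℝ) ^ ((k : ℕ) + 1) * esymF lam ((k : ℕ) + 1) y := by
    have hrw : P = ∏ i : Fin n, (X + C (-(lam i y))) := by
      simp [hP, sub_eq_add_neg, map_neg]
    rw [hrw, Finset.prod_X_add_C_coeff _ _ (by simp; omega)]
    have hcard : (Finset.univ : Finset (Fin n)).card - (n - 1 - (k : ℕ)) = (k : ℕ) + 1 := by
      simp; omega
    rw [hcard, esymF, Finset.mul_sum]
    refine Finset.sum_congr rfl fun t ht => ?_
    have htc : t.card = (k : ℕ) + 1 := (Finset.mem_powersetCard.mp ht).2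
    rw [← htc]
    calc (∏ i ∈ t, -lam i y) = ∏ i ∈ t, (-1 : ℝ) * lam i y := by
          simp only [neg_one_mul]
      _ = (-1 : ℝ) ^ t.card * ∏ i ∈ t, lam i y := by
          rw [Finset.prod_mul_distrib, Finset.prod_const]
  have := hPQ ▸ hPc
  rw [hQc] at this
  rw [pow_succ] at this
  linarith


/-- Frobenius recursion relations: if on an open set `U ⊆ ℝ^m` the
differentiable functions `λ_i` satisfy `N(x)ᵀ dλ_i = λ_i dλ_i` and the functions `p_k`
are the (sign-reversed) coefficients of `Π_i (λ − λ_i(x)) = λ^n − Σ_k p_k(x) λ^{n−k}`,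
then `N(x)ᵀ dp_k = dp_{k+1} + p_k dp_1` (with `p_{n+1} ≡ 0`) at every point of `U`.
The action of the transpose `N(x)ᵀ` on a differential `df(x)` is represented by the
covector `v ↦ df(x)(N(x)·v)`. -/
theorem stmt_7 (m n : ℕ) (hn : 0 < n) (U : Set (Fin m → ℝ)) (hU : IsOpen U)
    (N : (Fin m → ℝ) → Matrix (Fin m) (Fin m) ℝ)
    (lam : Fin n → (Fin m → ℝ) → ℝ)
    (hdiff : ∀ i : Fin n, ∀ x ∈ U, DifferentiableAt ℝ (lam i) x)
    (heig : ∀ i : Fin n, ∀ x ∈ U, ∀ v : Fin m → ℝ,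
      fderiv ℝ (lam i) x ((N x).mulVec v) = lam i x * fderiv ℝ (lam i) x v)
    (p : Fin n → (Fin m → ℝ) → ℝ)
    (hp : ∀ x ∈ U, ∀ t : ℝ,
      ∏ i : Fin n, (t - lam i x) = t ^ n - ∑ k : Fin n, p k x * t ^ (n - 1 - (k : ℕ))) :
    ∀ x ∈ U, ∀ k : Fin n, ∀ v : Fin m → ℝ,
      fderiv ℝ (p k) x ((N x).mulVec v)
        = (if h : (k : ℕ) + 1 < n then fderiv ℝ (p ⟨(k : ℕ) + 1, h⟩) x v else 0)
          + p k x * fderiv ℝ (p ⟨0, hn⟩) x v := by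
  intro x hx k v
  have hd : ∀ i, DifferentiableAt ℝ (lam i) x := fun i => hdiff i x hx
  have hfp : ∀ k : Fin n, ∀ w : Fin m → ℝ,
      fderiv ℝ (p k) x w = (-1 : ℝ) ^ (k : ℕ) * fderiv ℝ (esymF lam ((k : ℕ) + 1)) x w := by
    intro k w
    have heq : p k =ᶠ[nhds x] fun y => (-1 : ℝ) ^ (k : ℕ) * esymF lam ((k : ℕ) + 1) y :=
      Filter.eventuallyEq_of_mem (hU.mem_nhds hx) (fun y hy => p_eq (hp y hy) k)
    rw [heq.fderiv_eq, fderiv_const_mul (hasFDerivAt_esymF hd ((k : ℕ) + 1)).differentiableAt]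
    simp
  have hkey := key hd (fun i v => heig i x hx v) ((k : ℕ) + 1) v
  have hE : esymF lam ((k : ℕ) + 1) x = (-1 : ℝ) ^ (k : ℕ) * p k x := by
    rw [p_eq (hp x hx) k]
    rcases Nat.even_or_odd (k : ℕ) with h | h
    · simp [h.neg_one_pow]
    · simp [h.neg_one_pow]
  have hD0 : fderiv ℝ (p ⟨0, hn⟩) x v = fderiv ℝ (esymF lam 1) x v := by
    rw [hfp ⟨0, hn⟩ v]; norm_num
  rw [hfp k ((N x).mulVec v), hkey, hE, hD0]
  have hsq : ((-1 : ℝ) ^ (k : ℕ)) * ((-1 : ℝ) ^ (k : ℕ)) = 1 := by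
    rw [← pow_add, ← two_mul, pow_mul]; norm_num
  by_cases h : (k : ℕ) + 1 < n
  · rw [dif_pos h, hfp ⟨(k : ℕ) + 1, h⟩ v]
    simp only [pow_succ]
    linear_combination (fderiv ℝ (esymF lam 1) x v * p k x) * hsq
  · rw [dif_neg h]
    have hkn : (k : ℕ) + 1 = n := by omega
    have hz : esymF lam ((k : ℕ) + 1 + 1) = fun _ => (0 : ℝ) := by
      funext y
      rw [esymF, Finset.powersetCard_eq_empty.mpr (by simp [hkn]), Finset.sum_empty]
    rw [hz, fderiv_fun_const]
    simp only [Pi.zero_apply, ContinuousLinearMap.zero_apply]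
    linear_combination (fderiv ℝ (esymF lam 1) x v * p k x) * hsq
end
end

section
/- Let U ⊆ ℝ^m be open, let N : U → M_m(ℝ) be a matrix-valued map, let p_1, …, p_n : U → ℝ be differentiable functions, and set Δ(λ, x) = λ^n − Σ_{i=1}^n p_i(x) λ^{n−i}. Assume Δ satisfies N(x)ᵀ d_xΔ(λ, x) = λ d_xΔ(λ, x) + Δ(λ, x) dp_1(x) for all λ and x. Let Φ : ℝ × U → ℝ be a differentiable function which is a Nijenhuis functions generator, i.e. there is a covector-valued map α : ℝ × U → (ℝ^m)* with N(x)ᵀ d_xΦ(λ, x) = λ d_xΦ(λ, x) + Δ(λ, x) α(λ, x) for all λ, x. Let λ_i : U → ℝ be a differentiable function with Δ(λ_i(x), x) = 0 and ∂_λΔ(λ_i(x), x) ≠ 0 for all x (a simple root of Δ). Then the function Φ_i(x) := Φ(λ_i(x), x) satisfies N(x)ᵀ dΦ_i(x) = λ_i(x) dΦ_i(x) at every x; in particular λ_i itself satisfies N(x)ᵀ dλ_i(x) = λ_i(x) dλ_i(x). (Proposition: evaluating a Nijenhuis functions generator at the eigenvalues λ_i of the Nijenhuis tensor yields Nijenhuis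 functions.) -/
/-- The minimal polynomial of the Nijenhuis tensor:
`Δ(λ, x) = λ^n − Σ_i p_i(x) λ^{n−i}` (with `p` indexed by `Fin n`, zero-based). -/
noncomputable def Delta (m n : ℕ) (p : Fin n → (Fin m → ℝ) → ℝ) (t : ℝ)
    (x : Fin m → ℝ) : ℝ :=
  t ^ n - ∑ i : Fin n, p i x * t ^ (n - 1 - (i : ℕ))

/-- evaluating a Nijenhuis functions generator `Φ(λ)` (i.e. a λ-dependent
function with `N* d_xΦ(λ) = λ d_xΦ(λ) + Δ(λ) α_Φ(λ)`) at a simple root `λ_i(x)` of the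
minimal polynomial `Δ` (which itself satisfies `N* d_xΔ(λ) = λ d_xΔ(λ) + Δ(λ) dp_1`)
yields a Nijenhuis function: `N(x)ᵀ dΦ_i = λ_i dΦ_i` where `Φ_i(x) = Φ(λ_i(x), x)`;
in particular `N(x)ᵀ dλ_i = λ_i dλ_i`. The action of `N(x)ᵀ` on a differential `df(x)`
is represented by the covector `v ↦ df(x)(N(x)·v)`. -/
theorem stmt_9 (m n : ℕ) (hn : 0 < n) (U : Set (Fin m → ℝ)) (hU : IsOpen U)
    (N : (Fin m → ℝ) → Matrix (Fin m) (Fin m) ℝ)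
    (p : Fin n → (Fin m → ℝ) → ℝ)
    (hpdiff : ∀ i : Fin n, ∀ x ∈ U, DifferentiableAt ℝ (p i) x)
    (hΔ : ∀ t : ℝ, ∀ x ∈ U, ∀ v : Fin m → ℝ,
      -(∑ i : Fin n, t ^ (n - 1 - (i : ℕ)) * fderiv ℝ (p i) x ((N x).mulVec v))
        = t * (-(∑ i : Fin n, t ^ (n - 1 - (i : ℕ)) * fderiv ℝ (p i) x v))
          + Delta m n p t x * fderiv ℝ (p ⟨0, hn⟩) x v)
    (Φ : ℝ × (Fin m → ℝ) → ℝ)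
    (hΦdiff : ∀ t : ℝ, ∀ x ∈ U, DifferentiableAt ℝ Φ (t, x))
    (α : ℝ → (Fin m → ℝ) → (Fin m → ℝ) →L[ℝ] ℝ)
    (hgen : ∀ t : ℝ, ∀ x ∈ U, ∀ v : Fin m → ℝ,
      fderiv ℝ (fun y => Φ (t, y)) x ((N x).mulVec v)
        = t * fderiv ℝ (fun y => Φ (t, y)) x v + Delta m n p t x * α t x v)
    (lam : (Fin m → ℝ) → ℝ)
    (hldiff : ∀ x ∈ U, DifferentiableAt ℝ lam x)
    (hroot : ∀ x ∈ U, Delta m n p (lam x) x = 0)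
    (hsimple : ∀ x ∈ U, deriv (fun t => Delta m n p t x) (lam x) ≠ 0) :
    ∀ x ∈ U,
      (∀ v : Fin m → ℝ,
        fderiv ℝ (fun y => Φ (lam y, y)) x ((N x).mulVec v)
          = lam x * fderiv ℝ (fun y => Φ (lam y, y)) x v) ∧
      (∀ v : Fin m → ℝ,
        fderiv ℝ lam x ((N x).mulVec v) = lam x * fderiv ℝ lam x v) := by

  intro x hx
  have hxU : U ∈ nhds x := hU.mem_nhds hx
  -- splitting a continuous linear map on the product
  have split : ∀ (T : (ℝ × (Fin m → ℝ)) →L[ℝ] ℝ) (a : ℝ) (v : Fin m → ℝ),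
      T (a, v) = a * T (1, 0) + T (0, v) := by
    intro T a v
    have h : (a, v) = a • ((1:ℝ), (0 : Fin m → ℝ)) + ((0:ℝ), v) := by
      simp [Prod.ext_iff]
    rw [h, map_add, map_smul, smul_eq_mul]
  -- differentiability of the uncurried Delta
  have hGdiff : ∀ t : ℝ,
      DifferentiableAt ℝ (fun q : ℝ × (Fin m → ℝ) => Delta m n p q.1 q.2) (t, x) := by
    intro t
    have hps : ∀ i : Fin n, DifferentiableAt ℝ (fun q : ℝ × (Fin m → ℝ) => p i q.2) (t, x) :=
      fun i => DifferentiableAt.comp (t, x) (hpdiff i x hx) differentiableAt_snd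
    unfold Delta
    exact (differentiableAt_fst.pow n).sub
      (DifferentiableAt.fun_sum fun i _ => (hps i).mul (differentiableAt_fst.pow _))
  have hlamF := (hldiff x hx).hasFDerivAt
  have hprod : HasFDerivAt (fun y : Fin m → ℝ => (lam y, y))
      ((fderiv ℝ lam x).prod (ContinuousLinearMap.id ℝ (Fin m → ℝ))) x :=
    hlamF.prodMk (hasFDerivAt_id x)
  -- the partial derivative in x of Delta, explicitly
  have hDx : ∀ t : ℝ, ∀ v : Fin m → ℝ,
      fderiv ℝ (fun q : ℝ × (Fin m → ℝ) => Delta m n p q.1 q.2) (t, x) (0, v)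
        = -(∑ i : Fin n, t ^ (n - 1 - (i:ℕ)) * fderiv ℝ (p i) x v) := by
    intro t v
    have hDxt : HasFDerivAt (fun y => Delta m n p t y)
        ((0 : (Fin m → ℝ) →L[ℝ] ℝ) - ∑ i : Fin n,
          (t ^ (n - 1 - (i:ℕ))) • fderiv ℝ (p i) x) x := by
      unfold Delta
      exact (hasFDerivAt_const (t ^ n) x).sub
        (HasFDerivAt.fun_sum fun i _ => ((hpdiff i x hx).hasFDerivAt.mul_const _))
    have hpart : HasFDerivAt (fun y => Delta m n p t y)
        ((fderiv ℝ (fun q : ℝ × (Fin m → ℝ) => Delta m n p q.1 q.2) (t, x)).comp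
          (((0 : (Fin m → ℝ) →L[ℝ] ℝ)).prod (ContinuousLinearMap.id ℝ (Fin m → ℝ)))) x :=
      ((hGdiff t).hasFDerivAt).comp x ((hasFDerivAt_const t x).prodMk (hasFDerivAt_id x))
    have huniq := hpart.unique hDxt
    have h2 := congrArg (fun T : (Fin m → ℝ) →L[ℝ] ℝ => T v) huniq
    simp only [ContinuousLinearMap.comp_apply, ContinuousLinearMap.prod_apply,
      ContinuousLinearMap.id_apply, ContinuousLinearMap.zero_apply,
      ContinuousLinearMap.sub_apply, ContinuousLinearMap.sum_apply,
      ContinuousLinearMap.smul_apply, smul_eq_mul] at h2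
    rw [h2]
    ring
  -- the key relation from differentiating Delta(lam y, y) = 0
  have hGcomp : HasFDerivAt (fun y => Delta m n p (lam y) y)
      ((fderiv ℝ (fun q : ℝ × (Fin m → ℝ) => Delta m n p q.1 q.2) (lam x, x)).comp
        ((fderiv ℝ lam x).prod (ContinuousLinearMap.id ℝ (Fin m → ℝ)))) x := by
    exact HasFDerivAt.comp (f := fun y => (lam y, y)) x ((hGdiff (lam x)).hasFDerivAt) hprod
  have hzero : fderiv ℝ (fun y => Delta m n p (lam y) y) x = 0 := by
    have he : (fun y => Delta m n p (lam y) y) =ᶠ[nhds x] (fun _ => (0:ℝ)) := by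
      filter_upwards [hxU] with y hy using hroot y hy
    rw [he.fderiv_eq]
    exact fderiv_const_apply 0
  have hkey : ∀ v : Fin m → ℝ,
      fderiv ℝ lam x v
          * fderiv ℝ (fun q : ℝ × (Fin m → ℝ) => Delta m n p q.1 q.2) (lam x, x) (1, 0)
        + fderiv ℝ (fun q : ℝ × (Fin m → ℝ) => Delta m n p q.1 q.2) (lam x, x) (0, v) = 0 := by
    intro v
    have h1 : (fderiv ℝ (fun q : ℝ × (Fin m → ℝ) => Delta m n p q.1 q.2) (lam x, x)).comp
        ((fderiv ℝ lam x).prod (ContinuousLinearMap.id ℝ (Fin m → ℝ))) = 0 := by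
      rw [← hGcomp.fderiv, hzero]
    have h2 := congrArg (fun T : (Fin m → ℝ) →L[ℝ] ℝ => T v) h1
    simp only [ContinuousLinearMap.comp_apply, ContinuousLinearMap.prod_apply,
      ContinuousLinearMap.id_apply, ContinuousLinearMap.zero_apply] at h2
    rw [← split]
    exact h2
  -- the t-derivative of Delta at (lam x, x) is nonzero
  have hT : fderiv ℝ (fun q : ℝ × (Fin m → ℝ) => Delta m n p q.1 q.2) (lam x, x) (1, 0)
      = deriv (fun t => Delta m n p t x) (lam x) := by
    have h1 : HasDerivAt (fun t : ℝ => (t, x)) ((1:ℝ), (0 : Fin m → ℝ)) (lam x) :=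
      (hasDerivAt_id (lam x)).prodMk (hasDerivAt_const (lam x) x)
    have h2 : HasDerivAt (fun t => Delta m n p t x)
        (fderiv ℝ (fun q : ℝ × (Fin m → ℝ) => Delta m n p q.1 q.2) (lam x, x)
          ((1:ℝ), (0 : Fin m → ℝ))) (lam x) :=
      ((hGdiff (lam x)).hasFDerivAt).comp_hasDerivAt (l := fun q : ℝ × (Fin m → ℝ) => Delta m n p q.1 q.2) (lam x) h1
    exact h2.deriv.symm
  have hTne : fderiv ℝ (fun q : ℝ × (Fin m → ℝ) => Delta m n p q.1 q.2) (lam x, x) (1, 0) ≠ 0 := by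
    rw [hT]; exact hsimple x hx
  -- second claim: lam is a Nijenhuis function
  have hlamN : ∀ v : Fin m → ℝ,
      fderiv ℝ lam x ((N x).mulVec v) = lam x * fderiv ℝ lam x v := by
    intro v
    have h1 := hkey ((N x).mulVec v)
    have h2 := hkey v
    rw [hDx (lam x)] at h1 h2
    have h3 := hΔ (lam x) x hx v
    rw [hroot x hx, zero_mul, add_zero] at h3
    have hmul : fderiv ℝ lam x ((N x).mulVec v)
          * fderiv ℝ (fun q : ℝ × (Fin m → ℝ) => Delta m n p q.1 q.2) (lam x, x) (1, 0)
        = (lam x * fderiv ℝ lam x v)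
          * fderiv ℝ (fun q : ℝ × (Fin m → ℝ) => Delta m n p q.1 q.2) (lam x, x) (1, 0) := by
      linear_combination h1 - h3 - lam x * h2
    exact mul_right_cancel₀ hTne hmul
  refine ⟨?_, hlamN⟩
  -- first claim
  have hΦL := (hΦdiff (lam x) x hx).hasFDerivAt
  have hΦcomp : HasFDerivAt (fun y => Φ (lam y, y))
      ((fderiv ℝ Φ (lam x, x)).comp
        ((fderiv ℝ lam x).prod (ContinuousLinearMap.id ℝ (Fin m → ℝ)))) x := by
    exact HasFDerivAt.comp (f := fun y => (lam y, y)) x hΦL hprod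
  have hΦc : ∀ v : Fin m → ℝ, fderiv ℝ (fun y => Φ (lam y, y)) x v
      = fderiv ℝ lam x v * fderiv ℝ Φ (lam x, x) (1, 0) + fderiv ℝ Φ (lam x, x) (0, v) := by
    intro v
    rw [hΦcomp.fderiv]
    simp only [ContinuousLinearMap.comp_apply, ContinuousLinearMap.prod_apply,
      ContinuousLinearMap.id_apply]
    exact split _ _ _
  have hΦpart : ∀ v : Fin m → ℝ, fderiv ℝ (fun y => Φ (lam x, y)) x v
      = fderiv ℝ Φ (lam x, x) (0, v) := by
    intro v
    have h : HasFDerivAt (fun y => Φ (lam x, y))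
        ((fderiv ℝ Φ (lam x, x)).comp
          (((0 : (Fin m → ℝ) →L[ℝ] ℝ)).prod (ContinuousLinearMap.id ℝ (Fin m → ℝ)))) x :=
      hΦL.comp x ((hasFDerivAt_const (lam x) x).prodMk (hasFDerivAt_id x))
    rw [h.fderiv]
    simp
  have hgenL : ∀ v : Fin m → ℝ, fderiv ℝ Φ (lam x, x) (0, (N x).mulVec v)
      = lam x * fderiv ℝ Φ (lam x, x) (0, v) := by
    intro v
    have h := hgen (lam x) x hx v
    rw [hroot x hx, zero_mul, add_zero, hΦpart, hΦpart] at h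
    exact h
  intro v
  rw [hΦc, hΦc, hlamN, hgenL]
  ring
end

section
/- Let V be a real vector space of dimension 2n, let P : V* → V be a skew-symmetric bijective linear map, let P' : V* → V be skew-symmetric, and set N* = P^{-1} ∘ P' : V* → V*. Let α_1, …, α_n ∈ V* be linearly independent covectors which are pairwise in involution with respect to P, i.e. ⟨α_i, P α_j⟩ = 0 for all i, j. Then the subspace D* = span{α_1, …, α_n} is invariant under N* if and only if ⟨α_i, P' α_j⟩ = 0 for all i, j = 1, …, n. (This is the pointwise content of Theorem 3.2: an integrable system {H_1, …, H_n} on a regular bihamiltonian manifold is separable in Darboux–Nijenhuis coordinates if and only if, along with {H_i, H_j} = 0, also {H_i, H_j}' = 0 — the Liouville foliation is bilagrangian.) -/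
/-!
`D* = span α` is isotropic for the pairing `⟨β, Pγ⟩`, and since `P` is injective its
annihilator `(P D*)°` has dimension `2n - n = n`, so `D*` is Lagrangian: `D* = (P D*)°`.
Hence `N* α_i ∈ D*` iff `⟨N* α_i, P α_j⟩ = 0` for all `j`, and by skew-symmetry of `P`
this pairing is `-⟨α_j, P N* α_i⟩ = -⟨α_j, P' α_i⟩`.
-/

open Module Submodule

section Lagrangian

variable {K V ι : Type*} [Field K] [AddCommGroup V] [Module K V]

theorem Submodule.mem_dualAnnihilator_span_range {v : ι → V} {β : Dual K V} :
    β ∈ (span K (Set.range v)).dualAnnihilator ↔ ∀ i, β (v i) = 0 := by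
  rw [← SetLike.mem_coe, coe_dualAnnihilator_span, Set.mem_ofPred_eq, Set.range_subset_iff]
  rfl

theorem Submodule.mem_dualAnnihilator_map_span_range {P : Dual K V →ₗ[K] V}
    {α : ι → Dual K V} {β : Dual K V} :
    β ∈ ((span K (Set.range α)).map P).dualAnnihilator ↔ ∀ i, β (P (α i)) = 0 := by
  rw [map_span, ← Set.range_comp, mem_dualAnnihilator_span_range]
  rfl

theorem span_range_le_dualAnnihilator_map_iff {P : Dual K V →ₗ[K] V} {α : ι → Dual K V} :
    span K (Set.range α) ≤ ((span K (Set.range α)).map P).dualAnnihilator ↔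
      ∀ i j, α i (P (α j)) = 0 := by
  simp only [span_le, Set.range_subset_iff, SetLike.mem_coe,
    mem_dualAnnihilator_map_span_range]

theorem eq_dualAnnihilator_map_of_le_of_finrank_eq [FiniteDimensional K V]
    {P : Dual K V →ₗ[K] V} (hP : Function.Injective P) {D : Submodule K (Dual K V)}
    (hle : D ≤ (D.map P).dualAnnihilator) (hdim : finrank K V = 2 * finrank K D) :
    D = (D.map P).dualAnnihilator := by
  refine eq_of_le_of_finrank_le hle ?_
  have hmap := (D.equivMapOfInjective P hP).finrank_eq
  have hann := Subspace.finrank_add_finrank_dualAnnihilator_eq (D.map P)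
  omega

theorem map_span_range_le_iff_of_eq_dualAnnihilator {P P' : Dual K V →ₗ[K] V}
    (hP : ∀ β γ : Dual K V, β (P γ) = -(γ (P β)))
    {N : Dual K V →ₗ[K] Dual K V} (hN : ∀ β, P (N β) = P' β) {α : ι → Dual K V}
    (hLag : span K (Set.range α) = ((span K (Set.range α)).map P).dualAnnihilator) :
    (span K (Set.range α)).map N ≤ span K (Set.range α) ↔ ∀ i j, α i (P' (α j)) = 0 := by
  calc (span K (Set.range α)).map N ≤ span K (Set.range α)
      ↔ ∀ j, N (α j) ∈ ((span K (Set.range α)).map P).dualAnnihilator := by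
        rw [map_span_le, Set.forall_mem_range, ← hLag]
    _ ↔ ∀ j i, N (α j) (P (α i)) = 0 := by
        simp only [mem_dualAnnihilator_map_span_range]
    _ ↔ ∀ j i, α i (P' (α j)) = 0 := by
        simp only [hP (N _), hN, neg_eq_zero]
    _ ↔ ∀ i j, α i (P' (α j)) = 0 := forall_comm

end Lagrangian

theorem stmt_11_general (V : Type*) [AddCommGroup V] [Module ℝ V] [FiniteDimensional ℝ V]
    (n : ℕ) (hdim : Module.finrank ℝ V = 2 * n)
    (P P' : Module.Dual ℝ V →ₗ[ℝ] V)
    (hP : ∀ α β : Module.Dual ℝ V, α (P β) = -(β (P α)))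
    (hPbij : Function.Bijective P)
    (Nstar : Module.Dual ℝ V →ₗ[ℝ] Module.Dual ℝ V)
    (hNstar : ∀ α : Module.Dual ℝ V, P (Nstar α) = P' α)
    (α : Fin n → Module.Dual ℝ V) (hind : LinearIndependent ℝ α)
    (hinv : ∀ i j : Fin n, (α i) (P (α j)) = 0) :
    Submodule.map Nstar (Submodule.span ℝ (Set.range α)) ≤ Submodule.span ℝ (Set.range α)
      ↔ ∀ i j : Fin n, (α i) (P' (α j)) = 0 := by
  have hrank : finrank ℝ (span ℝ (Set.range α)) = n := by
    rw [finrank_span_eq_card hind, Fintype.card_fin]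
  have hLag := eq_dualAnnihilator_map_of_le_of_finrank_eq hPbij.injective
    (span_range_le_dualAnnihilator_map_iff.mpr hinv) (by rw [hdim, hrank])
  exact map_span_range_le_iff_of_eq_dualAnnihilator hP hNstar hLag

/-- pointwise Theorem 3.2, bilagrangian condition: on a `2n`-dimensional
space with `P` skew-symmetric bijective and `P'` skew-symmetric, if `α_1, …, α_n` are
linearly independent covectors with `⟨α_i, Pα_j⟩ = 0` for all `i, j`, then their span is
invariant under `N* = P⁻¹ ∘ P'` (characterized by `P(N*α) = P'α`) if and only if also
`⟨α_i, P'α_j⟩ = 0` for all `i, j`. -/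
theorem stmt_11 (V : Type*) [AddCommGroup V] [Module ℝ V] [FiniteDimensional ℝ V]
    (n : ℕ) (hdim : Module.finrank ℝ V = 2 * n)
    (P P' : Module.Dual ℝ V →ₗ[ℝ] V)
    (hP : ∀ α β : Module.Dual ℝ V, α (P β) = -(β (P α)))
    (hP' : ∀ α β : Module.Dual ℝ V, α (P' β) = -(β (P' α)))
    (hPbij : Function.Bijective P)
    (Nstar : Module.Dual ℝ V →ₗ[ℝ] Module.Dual ℝ V)
    (hNstar : ∀ α : Module.Dual ℝ V, P (Nstar α) = P' α)
    (α : Fin n → Module.Dual ℝ V) (hind : LinearIndependent ℝ α)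
    (hinv : ∀ i j : Fin n, (α i) (P (α j)) = 0) :
    Submodule.map Nstar (Submodule.span ℝ (Set.range α)) ≤ Submodule.span ℝ (Set.range α)
      ↔ ∀ i j : Fin n, (α i) (P' (α j)) = 0 :=
  stmt_11_general V n hdim P P' hP hPbij Nstar hNstar α hind hinv
end

section
/- Let b_i, a_i, c_i : ℝ → ℝ (i = 1, …, 4, with cyclic identifications b_{i+4} = b_i, a_{i+4} = a_i, c_{i+4} = c_i) be differentiable functions satisfying the Toda₃⁴ equations of motion: b_i' = a_{i−1} − a_i, a_i' = a_i(b_{i+1} − b_i) + c_{i−1} − c_i, c_i' = c_i(b_{i−2} − b_i) for i = 1, …, 4. Then for every μ ≠ 0 the Lax matrix L(μ) satisfies the Lax equation d/dt L(μ) = [L(μ), Φ(μ)] = L(μ)Φ(μ) − Φ(μ)L(μ), where L(μ) is the 4×4 matrix with rows (b₁, −μ, c₃/μ², a₄/μ), (a₁/μ, b₂, −μ, c₄/μ²), (c₁/μ², a₂/μ, b₃, −μ), (−μ, c₂/μ², a₃/μ, b₄), and Φ(μ) is the 4×4 matrix with rows (0, 0, c₃/μ², a₄/μ), (a₁/μ,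 0, 0, c₄/μ²), (c₁/μ², a₂/μ, 0, 0), (0, c₂/μ², a₃/μ, 0). (Proposition 4.1: the Hamiltonian vector field of the generalized four-site Toda lattice admits a Lax representation with spectral parameter.) -/
/-- The Lax matrix `L(μ)` of the Toda₃⁴ model (indices of `b, a, c` cyclic mod 4). -/
noncomputable def todaLax (b a c : ZMod 4 → ℝ → ℝ) (μ s : ℝ) :
    Matrix (Fin 4) (Fin 4) ℝ :=
  !![b 1 s, -μ, c 3 s / μ ^ 2, a 4 s / μ;
     a 1 s / μ, b 2 s, -μ, c 4 s / μ ^ 2;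
     c 1 s / μ ^ 2, a 2 s / μ, b 3 s, -μ;
     -μ, c 2 s / μ ^ 2, a 3 s / μ, b 4 s]

/-- The auxiliary matrix `Φ(μ)` of the Lax pair of the Toda₃⁴ model. -/
noncomputable def todaPhi (a c : ZMod 4 → ℝ → ℝ) (μ s : ℝ) :
    Matrix (Fin 4) (Fin 4) ℝ :=
  !![0, 0, c 3 s / μ ^ 2, a 4 s / μ;
     a 1 s / μ, 0, 0, c 4 s / μ ^ 2;
     c 1 s / μ ^ 2, a 2 s / μ, 0, 0;
     0, c 2 s / μ ^ 2, a 3 s / μ, 0]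

set_option maxHeartbeats 4000000 in
/-- Proposition 4.1: solutions of the Toda₃⁴ equations of motion satisfy,
for every `μ ≠ 0`, the Lax equation `d/dt L(μ) = [L(μ), Φ(μ)] = L(μ)Φ(μ) − Φ(μ)L(μ)`
(stated entrywise). -/
theorem stmt_13 (b a c : ZMod 4 → ℝ → ℝ)
    (hb : ∀ (i : ZMod 4) (t : ℝ), HasDerivAt (b i) (a (i - 1) t - a i t) t)
    (ha : ∀ (i : ZMod 4) (t : ℝ),
      HasDerivAt (a i) (a i t * (b (i + 1) t - b i t) + c (i - 1) t - c i t) t)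
    (hc : ∀ (i : ZMod 4) (t : ℝ), HasDerivAt (c i) (c i t * (b (i - 2) t - b i t)) t)
    (μ : ℝ) (hμ : μ ≠ 0) (t : ℝ) :
    ∀ i j : Fin 4,
      HasDerivAt (fun s => todaLax b a c μ s i j)
        ((todaLax b a c μ t * todaPhi a c μ t - todaPhi a c μ t * todaLax b a c μ t) i j)
        t := by
  have e4 : (4 : ZMod 4) = 0 := by decide
  have hb0 := hb 0 t; have hb1 := hb 1 t; have hb2 := hb 2 t; have hb3 := hb 3 t
  have ha0 := ha 0 t; have ha1 := ha 1 t; have ha2 := ha 2 t; have ha3 := ha 3 t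
  have hc0 := hc 0 t; have hc1 := hc 1 t; have hc2 := hc 2 t; have hc3 := hc 3 t
  simp only [show (0:ZMod 4)-1 = 3 by decide, show (0:ZMod 4)+1 = 1 by decide,
    show (0:ZMod 4)-2 = 2 by decide, show (1:ZMod 4)-1 = 0 by decide,
    show (1:ZMod 4)+1 = 2 by decide, show (1:ZMod 4)-2 = 3 by decide,
    show (2:ZMod 4)-1 = 1 by decide, show (2:ZMod 4)+1 = 3 by decide,
    show (2:ZMod 4)-2 = 0 by decide, show (3:ZMod 4)-1 = 2 by decide,
    show (3:ZMod 4)+1 = 0 by decide, show (3:ZMod 4)-2 = 1 by decide]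
    at hb0 hb1 hb2 hb3 ha0 ha1 ha2 ha3 hc0 hc1 hc2 hc3
  intro i j
  fin_cases i <;> fin_cases j <;>
    simp only [todaLax, todaPhi, Matrix.sub_apply, Matrix.mul_apply,
      Fin.sum_univ_four, e4, Matrix.cons_val', Matrix.cons_val_zero,
      Matrix.cons_val_one, Matrix.head_cons, Matrix.empty_val',
      Matrix.cons_val_fin_one, Matrix.head_fin_const, Matrix.of_apply,
      Matrix.cons_val_two, Matrix.tail_cons, Matrix.cons_val_three,
      Fin.mk_zero, Fin.mk_one, Fin.reduceFinMk, Matrix.cons_val]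
  · convert hb1 using 1; field_simp; try ring
  · refine (hasDerivAt_const t (-μ)).congr_deriv ?_; field_simp; try ring
  · refine (hc3.div_const (μ^2)).congr_deriv ?_; field_simp; try ring
  · refine (ha0.div_const μ).congr_deriv ?_; field_simp; try ring
  · refine (ha1.div_const μ).congr_deriv ?_; field_simp; try ring
  · convert hb2 using 1; field_simp; try ring
  · refine (hasDerivAt_const t (-μ)).congr_deriv ?_; field_simp; try ring
  · refine (hc0.div_const (μ^2)).congr_deriv ?_; field_simp; try ring
  · refine (hc1.div_const (μ^2)).congr_deriv ?_; field_simp; try ring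
  · refine (ha2.div_const μ).congr_deriv ?_; field_simp; try ring
  · convert hb3 using 1; field_simp; try ring
  · refine (hasDerivAt_const t (-μ)).congr_deriv ?_; field_simp; try ring
  · refine (hasDerivAt_const t (-μ)).congr_deriv ?_; field_simp; try ring
  · refine (hc2.div_const (μ^2)).congr_deriv ?_; field_simp; try ring
  · refine (ha3.div_const μ).congr_deriv ?_; field_simp; try ring
  · convert hb0 using 1; field_simp; try ring
end

section
/- Let b₁,…,b₄, a₁,…,a₃, c₁, c₂ : ℝ → ℝ be differentiable functions satisfying the open Toda₃⁴ equations (the restriction of the Toda₃⁴ flow to a₄ = c₃ = c₄ = 0): b₁' = −a₁, b₂' = a₁ − a₂, b₃' = a₂ − a₃, b₄' = a₃, a₁' = a₁(b₂ − b₁) − c₁, a₂' = a₂(b₃ − b₂) + c₁ − c₂, a₃' = a₃(b₄ − b₃) + c₂, c₁' = c₁(b₃ − b₁), c₂' = c₂(b₄ − b₂). Then for every μ ≠ 0 the matrix L₀(μ) with rows (b₁, −μ, 0, 0), (a₁/μ, b₂, −μ, 0), (c₁/μ², a₂/μ, b₃, −μ), (−μ, c₂/μ², a₃/μ, b₄)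 satisfies the Lax equation d/dt L₀(μ) = [L₀(μ), Φ₀(μ)], where Φ₀(μ) is the matrix with rows (0,0,0,0), (a₁/μ, 0, 0, 0), (c₁/μ², a₂/μ, 0, 0), (0, c₂/μ², a₃/μ, 0). -/
/-- The Lax matrix `L₀(μ)` of the open Toda₃⁴ system. -/
noncomputable def openLax (b1 b2 b3 b4 a1 a2 a3 c1 c2 : ℝ → ℝ) (μ s : ℝ) :
    Matrix (Fin 4) (Fin 4) ℝ :=
  !![b1 s, -μ, 0, 0;
     a1 s / μ, b2 s, -μ, 0;
     c1 s / μ ^ 2, a2 s / μ, b3 s, -μ;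
     -μ, c2 s / μ ^ 2, a3 s / μ, b4 s]

/-- The auxiliary matrix `Φ₀(μ)` of the Lax pair of the open Toda₃⁴ system. -/
noncomputable def openPhi (a1 a2 a3 c1 c2 : ℝ → ℝ) (μ s : ℝ) :
    Matrix (Fin 4) (Fin 4) ℝ :=
  !![0, 0, 0, 0;
     a1 s / μ, 0, 0, 0;
     c1 s / μ ^ 2, a2 s / μ, 0, 0;
     0, c2 s / μ ^ 2, a3 s / μ, 0]

set_option maxHeartbeats 2000000 in
/-- solutions of the open Toda₃⁴ equations satisfy, for every `μ ≠ 0`, the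
Lax equation `d/dt L₀(μ) = [L₀(μ), Φ₀(μ)] = L₀(μ)Φ₀(μ) − Φ₀(μ)L₀(μ)` (entrywise). -/
theorem stmt_17 (b1 b2 b3 b4 a1 a2 a3 c1 c2 : ℝ → ℝ)
    (hb1 : ∀ t, HasDerivAt b1 (-(a1 t)) t)
    (hb2 : ∀ t, HasDerivAt b2 (a1 t - a2 t) t)
    (hb3 : ∀ t, HasDerivAt b3 (a2 t - a3 t) t)
    (hb4 : ∀ t, HasDerivAt b4 (a3 t) t)
    (ha1 : ∀ t, HasDerivAt a1 (a1 t * (b2 t - b1 t) - c1 t) t)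
    (ha2 : ∀ t, HasDerivAt a2 (a2 t * (b3 t - b2 t) + c1 t - c2 t) t)
    (ha3 : ∀ t, HasDerivAt a3 (a3 t * (b4 t - b3 t) + c2 t) t)
    (hc1 : ∀ t, HasDerivAt c1 (c1 t * (b3 t - b1 t)) t)
    (hc2 : ∀ t, HasDerivAt c2 (c2 t * (b4 t - b2 t)) t)
    (μ : ℝ) (hμ : μ ≠ 0) (t : ℝ) :
    ∀ i j : Fin 4,
      HasDerivAt (fun s => openLax b1 b2 b3 b4 a1 a2 a3 c1 c2 μ s i j)
        ((openLax b1 b2 b3 b4 a1 a2 a3 c1 c2 μ t * openPhi a1 a2 a3 c1 c2 μ t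
            - openPhi a1 a2 a3 c1 c2 μ t * openLax b1 b2 b3 b4 a1 a2 a3 c1 c2 μ t) i j)
        t := by
  intro i j
  fin_cases i <;> fin_cases j <;>
    simp [openLax, openPhi, Matrix.mul_apply, Fin.sum_univ_four, Matrix.vecHead, Matrix.vecTail] <;>
    first
    | (convert hasDerivAt_const t (-μ) using 1 <;> (try simp [Matrix.vecHead, Matrix.vecTail]) <;> rfl)
    | (convert hasDerivAt_const t (0:ℝ) using 1 <;> (try simp [Matrix.vecHead, Matrix.vecTail]) <;> rfl)
    | ((convert hb1 t using 1 <;> field_simp [hμ] <;> ring) <;> done)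
    | ((convert hb2 t using 1 <;> field_simp [hμ] <;> ring) <;> done)
    | ((convert hb3 t using 1 <;> field_simp [hμ] <;> ring) <;> done)
    | ((convert hb4 t using 1 <;> field_simp [hμ] <;> ring) <;> done)
    | ((convert (ha1 t).div_const μ using 1 <;> (try rfl) <;> field_simp [hμ] <;> ring) <;> done)
    | ((convert (ha2 t).div_const μ using 1 <;> (try rfl) <;> field_simp [hμ] <;> ring) <;> done)
    | ((convert (ha3 t).div_const μ using 1 <;> (try rfl) <;> field_simp [hμ] <;> ring) <;> done)
    | ((convert (hc1 t).div_const (μ^2) using 1 <;> (try rfl) <;> field_simp [hμ] <;> ring) <;> done)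
    | ((convert (hc2 t).div_const (μ^2) using 1 <;> (try rfl) <;> field_simp [hμ] <;> ring) <;> done)
end

section
/- Let L₀(μ) be the 4×4 matrix with rows (b₁, −μ, 0, 0), (a₁/μ, b₂, −μ, 0), (c₁/μ², a₂/μ, b₃, −μ), (−μ, c₂/μ², a₃/μ, b₄), depending on variables (b₁,…,b₄, a₁, a₂, a₃, c₁, c₂) and a parameter μ ≠ 0. Then its characteristic polynomial is det(λ·I₄ − L₀(μ)) = −μ⁴ + λ⁴ − h₀λ³ + h₁λ² − h₂λ + h₃, where h₀ = b₁+b₂+b₃+b₄, h₁ = Σ_{1≤i<j≤4} bᵢbⱼ + a₁+a₂+a₃, h₂ = Σ_{1≤i<j<k≤4} bᵢbⱼb_k + a₁(b₃+b₄) + a₂(b₄+b₁) + a₃(b₁+b₂) + c₁ + c₂, and h₃ = b₁a₂b₄ + a₁b₃b₄ + b₁b₂a₃ + b₁c₂ + a₁a₃ + c₁b₄ + b₁b₂b₃b₄. In particular the Lax representation of the open Toda₃⁴ system provides only the three nontrivial integrals h₁, h₂, h₃ beyond the Casimir h₀. -/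
/-- the characteristic polynomial of the Lax matrix `L₀(μ)` of the open
Toda₃⁴ system is
`det(λI₄ − L₀(μ)) = −μ⁴ + λ⁴ − h₀λ³ + h₁λ² − h₂λ + h₃`, with the explicit integrals
`h₀, h₁, h₂, h₃` given below. -/
theorem stmt_18 (b1 b2 b3 b4 a1 a2 a3 c1 c2 lam μ : ℝ) (hμ : μ ≠ 0) :
    (lam • (1 : Matrix (Fin 4) (Fin 4) ℝ)
        - !![b1, -μ, 0, 0;
             a1 / μ, b2, -μ, 0;
             c1 / μ ^ 2, a2 / μ, b3, -μ;
             -μ, c2 / μ ^ 2, a3 / μ, b4]).det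
      = -μ ^ 4 + lam ^ 4 - (b1 + b2 + b3 + b4) * lam ^ 3
        + (b1 * b2 + b1 * b3 + b1 * b4 + b2 * b3 + b2 * b4 + b3 * b4
            + a1 + a2 + a3) * lam ^ 2
        - (b1 * b2 * b3 + b1 * b2 * b4 + b1 * b3 * b4 + b2 * b3 * b4
            + a1 * (b3 + b4) + a2 * (b4 + b1) + a3 * (b1 + b2) + c1 + c2) * lam
        + (b1 * a2 * b4 + a1 * b3 * b4 + b1 * b2 * a3 + b1 * c2 + a1 * a3
            + c1 * b4 + b1 * b2 * b3 * b4) := by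
  have h1 : lam • (1 : Matrix (Fin 4) (Fin 4) ℝ)
        - !![b1, -μ, 0, 0;
             a1 / μ, b2, -μ, 0;
             c1 / μ ^ 2, a2 / μ, b3, -μ;
             -μ, c2 / μ ^ 2, a3 / μ, b4]
      = !![lam - b1, μ, 0, 0;
           -(a1 / μ), lam - b2, μ, 0;
           -(c1 / μ ^ 2), -(a2 / μ), lam - b3, μ;
           μ, -(c2 / μ ^ 2), -(a3 / μ), lam - b4] := by
    ext i j
    fin_cases i <;> fin_cases j <;>
      simp [Matrix.one_apply]
  rw [h1]
  simp [Matrix.det_succ_row_zero, Fin.sum_univ_succ, Fin.succAbove]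
  field_simp
  ring
end

section
/- Let V be a finite-dimensional real vector space and let P, Q : V* → V be skew-symmetric linear maps. Let β_1, …, β_n ∈ V* be covectors, F an n×n real matrix, and λ₀ ∈ ℝ a scalar which is not an eigenvalue of F, such that Q β_i = Σ_{j=1}^n F_{ij} P β_j for all i. Suppose σ ∈ V* satisfies Q σ = λ₀ P σ. Then ⟨σ, P β_i⟩ = 0 and ⟨σ, Q β_i⟩ = 0 for all i = 1, …, n. (This is Lemma 5.2: any function σ with Q₀ dσ = λ₄ P₀ dσ, where λ₄ is not an eigenvalue of the control matrix F⁰ of the open Toda₃⁴ Hamiltonians h₁, h₂, h₃, Poisson-commutes with h₁, h₂, h₃ with respect to both brackets; this yields the additional integral of motion λ₄ proving complete integrability of the open Toda₃⁴ system.) -/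
/-- Lemma 5.2, pointwise: if `Q β_i = Σ_j F_{ij} P β_j` and `σ` satisfies
`Q σ = λ₀ P σ` with `λ₀` not an eigenvalue of the matrix `F`, then `⟨σ, P β_i⟩ = 0` and
`⟨σ, Q β_i⟩ = 0` for all `i`. -/
theorem stmt_19 (V : Type*) [AddCommGroup V] [Module ℝ V] [FiniteDimensional ℝ V]
    (P Q : Module.Dual ℝ V →ₗ[ℝ] V)
    (hP : ∀ α β : Module.Dual ℝ V, α (P β) = -(β (P α)))
    (hQ : ∀ α β : Module.Dual ℝ V, α (Q β) = -(β (Q α)))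
    (n : ℕ) (β : Fin n → Module.Dual ℝ V) (F : Matrix (Fin n) (Fin n) ℝ) (lam0 : ℝ)
    (hnoteig : ∀ v : Fin n → ℝ, F.mulVec v = lam0 • v → v = 0)
    (hrel : ∀ i : Fin n, Q (β i) = ∑ j : Fin n, F i j • P (β j))
    (σ : Module.Dual ℝ V) (hσ : Q σ = lam0 • P σ) :
    ∀ i : Fin n, σ (P (β i)) = 0 ∧ σ (Q (β i)) = 0 := by
  set v : Fin n → ℝ := fun i => σ (P (β i)) with hv
  have key : ∀ i, σ (Q (β i)) = lam0 * v i := by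
    intro i
    have h1 : σ (Q (β i)) = -(β i (Q σ)) := hQ σ (β i)
    rw [h1, hσ]
    simp only [map_smul, smul_eq_mul]
    rw [hP (β i) σ]
    ring_nf
    rfl
  have key2 : ∀ i, σ (Q (β i)) = F.mulVec v i := by
    intro i
    rw [hrel i]
    simp [Matrix.mulVec, dotProduct, v]
  have hveq : F.mulVec v = lam0 • v := by
    funext i
    rw [← key2 i, key i]; rfl
  have hv0 : v = 0 := hnoteig v hveq
  intro i
  have h1 : v i = 0 := by rw [hv0]; rfl
  refine ⟨h1, ?_⟩
  rw [key i, h1, mul_zero]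
end
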